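/- arXiv:2303.05568 — 4 statements merged into one kernel-verified Lean document; each statement's English description precedes it below -/
import Mathlib

section
/- For all α > 0, r ∈ (0,1), and n ∈ ℕ satisfying 1/(α r n^r) + α r / n^{1-r} ≤ 1/14, the following holds: ∑_{k=1}^∞ ∑_{v=(2k+1)n-k}^∞ e^{-α v^r} < (636/169) · (n^{1-r}/(α r)) · e^{-α (3n-1)^r}. -/
/-!
Write `T(w) = w^(1-r) / (α r) · e^(-α w^r)`, the asymptotic size of `∫_w^∞ e^(-α t^r) dt`.
The hypothesis on `n` persists for all `w ≥ n` and makes `α r w^(r-1) ≤ 1/14` small and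
`α r w^r ≥ 14` large; Bernoulli's inequality for `(w+1)^r - w^r` then gives
`e^(-α w^r) ≤ (6/5) (T(w) - T(w+1))`, so each inner sum telescopes to at most `(6/5) T(m)`
where `m` is its first index. Because `α r w^r ≥ 14`, `T` decays at least like `(a/b)^13`
beyond `a = 3n - 1`, and the `k`-th first index is at least `(k+2) a / 2`. Summing
`(2/(k+2))^13` over `k` costs a factor `1 + 2 (2/3)^11`, and `T(a) ≤ 3 n^(1-r)/(α r) · e^(-α a^r)`;
`(6/5) · 3 · (1 + 2 (2/3)^11) < 636/169`.
-/

open Real Finset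

theorem sum_range_le_of_le_sub_succ {f g : ℕ → ℝ} (hg : ∀ k, 0 ≤ g k)
    (h : ∀ k, f k ≤ g k - g (k + 1)) (N : ℕ) : ∑ k ∈ range N, f k ≤ g 0 :=
  calc ∑ k ∈ range N, f k ≤ ∑ k ∈ range N, (g k - g (k + 1)) := sum_le_sum fun k _ => h k
    _ = g 0 - g N := sum_range_sub' g N
    _ ≤ g 0 := sub_le_self _ (hg N)

theorem tsum_le_of_le_sub_succ {f g : ℕ → ℝ} (hf : ∀ k, 0 ≤ f k) (hg : ∀ k, 0 ≤ g k)
    (h : ∀ k, f k ≤ g k - g (k + 1)) : ∑' k, f k ≤ g 0 :=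
  Real.tsum_le_of_sum_range_le hf (sum_range_le_of_le_sub_succ hg h)

theorem two_div_pow_thirteen_le (k : ℕ) :
    (2 / ((k : ℝ) + 3)) ^ 13 ≤ (2 / 3) ^ 11 * (4 / ((k : ℝ) + 2) - 4 / ((k : ℝ) + 3)) := by
  have hk : (0 : ℝ) ≤ k := k.cast_nonneg
  have h11 : (2 / ((k : ℝ) + 3)) ^ 11 ≤ (2 / 3) ^ 11 := by
    gcongr; linarith
  have h2 : (2 / ((k : ℝ) + 3)) ^ 2 ≤ 4 / ((k : ℝ) + 2) - 4 / ((k : ℝ) + 3) := by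
    rw [div_sub_div _ _ (by positivity) (by positivity), div_pow,
      div_le_div_iff₀ (by positivity) (by positivity)]
    nlinarith
  calc (2 / ((k : ℝ) + 3)) ^ 13 = (2 / ((k : ℝ) + 3)) ^ 11 * (2 / ((k : ℝ) + 3)) ^ 2 := by ring
    _ ≤ _ := mul_le_mul h11 h2 (by positivity) (by positivity)

theorem tsum_le_of_le_mul_two_div_pow {F : ℕ → ℝ} {C : ℝ} (hC : 0 ≤ C) (hF0 : ∀ k, 0 ≤ F k)
    (hF : ∀ k, F k ≤ C * (2 / ((k : ℝ) + 2)) ^ 13) :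
    ∑' k, F k ≤ C * (1 + 2 * (2 / 3) ^ 11) := by
  refine Real.tsum_le_of_sum_range_le hF0 fun N => ?_
  cases N with
  | zero => simp only [range_zero, sum_empty]; positivity
  | succ N =>
    have hstep : ∀ k : ℕ, F (k + 1) ≤ C * (2 / 3) ^ 11 * (4 / ((k : ℝ) + 2)) -
        C * (2 / 3) ^ 11 * (4 / (((k + 1 : ℕ) : ℝ) + 2)) := by
      intro k
      have h := hF (k + 1)
      push_cast at h ⊢
      rw [show (k : ℝ) + 1 + 2 = k + 3 by ring] at h ⊢
      rw [mul_assoc, mul_assoc, ← mul_sub, ← mul_sub]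
      exact h.trans (mul_le_mul_of_nonneg_left (two_div_pow_thirteen_le k) hC)
    have htail := sum_range_le_of_le_sub_succ (fun k => by positivity) hstep N
    have hF0' : F 0 ≤ C := by simpa using hF 0
    rw [sum_range_succ']
    norm_num at htail ⊢
    linarith

theorem mul_rpow_div_le_rpow_add_one_sub_rpow {w r : ℝ} (hw : 0 ≤ w) (hr0 : 0 ≤ r)
    (hr1 : r ≤ 1) : r * w ^ r / (w + 1) ≤ (w + 1) ^ r - w ^ r := by
  have hw1 : 0 < w + 1 := by linarith
  have hbern := rpow_one_add_le_one_add_mul_self (s := -(w + 1)⁻¹)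
    (by linarith [inv_le_one_of_one_le₀ (by linarith : (1 : ℝ) ≤ w + 1)]) hr0 hr1
  rw [show 1 + -(w + 1)⁻¹ = w / (w + 1) by field_simp; ring, div_rpow hw hw1.le,
    div_le_iff₀ (by positivity)] at hbern
  calc r * w ^ r / (w + 1) ≤ r * (w + 1) ^ r / (w + 1) := by gcongr; linarith
    _ ≤ (w + 1) ^ r - w ^ r := by
      have : (1 + r * -(w + 1)⁻¹) * (w + 1) ^ r = (w + 1) ^ r - r * (w + 1) ^ r / (w + 1) := by ring
      linarith

theorem one_add_mul_exp_neg_div_le {x u : ℝ} (hu : 0 ≤ u) (hux : u ≤ x / 14) (hx : x ≤ 1 / 14) :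
    (1 + u) * exp (-(x / (1 + u))) ≤ 1 - 5 / 6 * x := by
  have hx0 : 0 ≤ x := by linarith
  have hexp : exp (-(x / (1 + u))) ≤ (1 + x / (1 + u))⁻¹ := by
    rw [exp_neg]
    exact inv_anti₀ (by positivity) (by linarith [add_one_le_exp (x / (1 + u))])
  calc (1 + u) * exp (-(x / (1 + u))) ≤ (1 + u) * (1 + x / (1 + u))⁻¹ := by gcongr
    _ = (1 + u) ^ 2 / (1 + u + x) := by field_simp
    _ ≤ 1 - 5 / 6 * x := by
      rw [div_le_iff₀ (by positivity)]
      nlinarith [mul_nonneg hx0 hu, mul_nonneg hx0 hx0]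

theorem exp_neg_mul_rpow_le_mul_div_pow {α r a b : ℝ} (hα : 0 ≤ α) (ha : 0 < a) (hab : a ≤ b)
    (p : ℕ) (hp : (p : ℝ) ≤ α * r * a ^ r) :
    exp (-α * b ^ r) ≤ exp (-α * a ^ r) * (a / b) ^ p := by
  have hb0 : 0 < b := ha.trans_le hab
  set L := log (b / a)
  have hL : 0 ≤ L := log_nonneg ((one_le_div ha).2 hab)
  have hb : b ^ r = a ^ r * exp (r * L) := by
    rw [mul_comm r, ← rpow_def_of_pos (by positivity), ← mul_rpow ha.le (by positivity),
      mul_div_cancel₀ b ha.ne']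
  have hpow : (a / b) ^ p = exp (-(p * L)) := by
    rw [← mul_neg, exp_nat_mul, exp_neg, exp_log (by positivity), inv_div]
  have hgrowth : α * a ^ r * (1 + r * L) ≤ α * b ^ r := by
    rw [hb, mul_assoc]
    gcongr
    linarith [add_one_le_exp (r * L)]
  rw [hpow, ← exp_add]
  gcongr
  nlinarith [mul_le_mul_of_nonneg_right hp hL]

noncomputable def stretchedExpTail (α r w : ℝ) : ℝ := w ^ (1 - r) / (α * r) * exp (-α * w ^ r)

def InTailRegime (α r w : ℝ) : Prop := α * r / w ^ (1 - r) ≤ 1 / 14 ∧ 14 ≤ α * r * w ^ r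

theorem stretchedExpTail_nonneg {α r w : ℝ} (hα : 0 ≤ α) (hr : 0 ≤ r) (hw : 0 ≤ w) :
    0 ≤ stretchedExpTail α r w := by
  unfold stretchedExpTail; positivity

theorem InTailRegime.mono {α r w w' : ℝ} (hα : 0 ≤ α) (hr0 : 0 ≤ r) (hr1 : r ≤ 1) (hw : 0 < w)
    (hww' : w ≤ w') (h : InTailRegime α r w) : InTailRegime α r w' := by
  have hαr : 0 ≤ α * r := mul_nonneg hα hr0
  constructor
  · refine le_trans ?_ h.1
    gcongr
  · exact h.2.trans (by gcongr)

theorem InTailRegime.of_one_div_add_le {α r w : ℝ} (hαr : 0 < α * r) (hw : 0 < w)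
    (h : 1 / (α * r * w ^ r) + α * r / w ^ (1 - r) ≤ 1 / 14) : InTailRegime α r w := by
  have hαrw : 0 < α * r * w ^ r := by have := rpow_pos_of_pos hw r; positivity
  have hsmall : 0 ≤ α * r / w ^ (1 - r) := by positivity
  refine ⟨by linarith [one_div_nonneg.2 hαrw.le], ?_⟩
  rw [← one_div_le_one_div hαrw (by norm_num)]
  linarith

theorem stretchedExpTail_le_mul_div_pow {α r a b : ℝ} (hα : 0 ≤ α) (hr0 : 0 ≤ r) (ha : 0 < a)
    (hab : a ≤ b) (p : ℕ) (hp : (p + 1 : ℝ) ≤ α * r * a ^ r) :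
    stretchedExpTail α r b ≤ stretchedExpTail α r a * (a / b) ^ p := by
  have hb : 0 < b := ha.trans_le hab
  have hpow : b ^ (1 - r) ≤ a ^ (1 - r) * (b / a) := by
    rw [← mul_div_cancel₀ b ha.ne', mul_rpow ha.le (by positivity), mul_div_cancel₀ b ha.ne']
    gcongr
    exact rpow_le_self_of_one_le ((one_le_div ha).2 hab) (by linarith)
  have hexp := exp_neg_mul_rpow_le_mul_div_pow hα ha hab (p + 1) (by exact_mod_cast hp)
  unfold stretchedExpTail
  calc b ^ (1 - r) / (α * r) * exp (-α * b ^ r)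
      ≤ a ^ (1 - r) * (b / a) / (α * r) * (exp (-α * a ^ r) * (a / b) ^ (p + 1)) := by
        gcongr
    _ = a ^ (1 - r) / (α * r) * exp (-α * a ^ r) * (a / b) ^ p := by
        rw [pow_succ]
        field_simp

theorem exp_neg_mul_rpow_le_sub_stretchedExpTail {α r w : ℝ} (hα : 0 < α) (hr0 : 0 < r)
    (hr1 : r ≤ 1) (hw : 0 < w) (hreg : InTailRegime α r w) :
    exp (-α * w ^ r) ≤ 6 / 5 * (stretchedExpTail α r w - stretchedExpTail α r (w + 1)) := by
  set x := α * r / w ^ (1 - r) with hx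
  set T := stretchedExpTail α r
  have hxw : α * r * w ^ r = x * w := by
    have hwpow : w ^ r * w ^ (1 - r) = w := by rw [← rpow_add hw]; simp
    rw [hx, div_mul_eq_mul_div, eq_div_iff (by positivity), mul_assoc, hwpow]
  have hu : w⁻¹ ≤ x / 14 := by
    rw [inv_le_iff_one_le_mul₀ hw]; linarith [hreg.2]
  have hgap : x / (1 + w⁻¹) ≤ α * ((w + 1) ^ r - w ^ r) := by
    rw [show x / (1 + w⁻¹) = α * (r * w ^ r / (w + 1)) by
      rw [← mul_div_assoc, ← mul_assoc, hxw]; field_simp]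
    gcongr
    exact mul_rpow_div_le_rpow_add_one_sub_rpow hw.le hr0.le hr1
  have hexp : exp (-α * (w + 1) ^ r) ≤ exp (-α * w ^ r) * exp (-(x / (1 + w⁻¹))) := by
    rw [← exp_add]; gcongr; linarith
  have hpow : (w + 1) ^ (1 - r) ≤ w ^ (1 - r) * (1 + w⁻¹) := by
    rw [show w + 1 = w * (1 + w⁻¹) by field_simp, mul_rpow hw.le (by positivity)]
    gcongr
    exact rpow_le_self_of_one_le (by simp; positivity) (by linarith)
  have hstep : T (w + 1) ≤ T w * ((1 + w⁻¹) * exp (-(x / (1 + w⁻¹)))) := by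
    calc T (w + 1) ≤ w ^ (1 - r) * (1 + w⁻¹) / (α * r) *
          (exp (-α * w ^ r) * exp (-(x / (1 + w⁻¹)))) := by
          unfold T stretchedExpTail; gcongr
      _ = _ := by unfold T stretchedExpTail; ring
  have hTx : T w * x = exp (-α * w ^ r) := by
    unfold T stretchedExpTail; rw [hx]; field_simp
  have hnum := one_add_mul_exp_neg_div_le (inv_nonneg.2 hw.le) hu hreg.1
  have hT : 0 ≤ T w := stretchedExpTail_nonneg hα.le hr0.le hw.le
  nlinarith [mul_le_mul_of_nonneg_left hnum hT]

theorem tsum_exp_neg_mul_rpow_le {α r : ℝ} (hα : 0 < α) (hr0 : 0 < r) (hr1 : r ≤ 1) {m : ℕ}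
    (hm : 0 < m) (hreg : InTailRegime α r m) :
    ∑' v : ℕ, exp (-α * ((m + v : ℕ) : ℝ) ^ r) ≤ 6 / 5 * stretchedExpTail α r m := by
  have hm' : (0 : ℝ) < m := by exact_mod_cast hm
  have h := tsum_le_of_le_sub_succ (f := fun v : ℕ => exp (-α * ((m + v : ℕ) : ℝ) ^ r))
    (g := fun v : ℕ => 6 / 5 * stretchedExpTail α r ((m + v : ℕ) : ℝ)) (fun v => (exp_pos _).le)
    (fun v => mul_nonneg (by norm_num) (stretchedExpTail_nonneg hα.le hr0.le (by positivity)))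
    (fun v => ?_)
  · simpa using h
  have hmv : (m : ℝ) ≤ ((m + v : ℕ) : ℝ) := by exact_mod_cast Nat.le_add_right m v
  have key := exp_neg_mul_rpow_le_sub_stretchedExpTail hα hr0 hr1 (hm'.trans_le hmv)
    (hreg.mono hα.le hr0.le hr1 hm' hmv)
  rw [← add_assoc, Nat.cast_add _ 1, Nat.cast_one]
  linarith

theorem tsum_exp_neg_mul_rpow_le_two_div_pow {α r a : ℝ} (hα : 0 < α) (hr0 : 0 < r) (hr1 : r ≤ 1)
    (ha : 0 < a) (hreg : InTailRegime α r a) {k m : ℕ} (hkm : ((k : ℝ) + 2) * a ≤ 2 * m) :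
    ∑' v : ℕ, exp (-α * ((m + v : ℕ) : ℝ) ^ r) ≤
      6 / 5 * stretchedExpTail α r a * (2 / ((k : ℝ) + 2)) ^ 13 := by
  have ham : a ≤ m := by nlinarith [k.cast_nonneg (α := ℝ)]
  have hratio : a / m ≤ 2 / ((k : ℝ) + 2) := by
    rw [div_le_div_iff₀ (by linarith) (by positivity)]; linarith
  calc ∑' v : ℕ, exp (-α * ((m + v : ℕ) : ℝ) ^ r) ≤ 6 / 5 * stretchedExpTail α r m :=
        tsum_exp_neg_mul_rpow_le hα hr0 hr1 (by exact_mod_cast ha.trans_le ham)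
          (hreg.mono hα.le hr0.le hr1 ha ham)
    _ ≤ 6 / 5 * (stretchedExpTail α r a * (a / m) ^ 13) := by
        gcongr
        exact stretchedExpTail_le_mul_div_pow hα.le hr0.le ha ham 13
          (by push_cast; linarith [hreg.2])
    _ ≤ 6 / 5 * (stretchedExpTail α r a * (2 / ((k : ℝ) + 2)) ^ 13) := by
        have := stretchedExpTail_nonneg hα.le hr0.le ha.le
        gcongr
    _ = 6 / 5 * stretchedExpTail α r a * (2 / ((k : ℝ) + 2)) ^ 13 := by ring

theorem stretchedExpTail_le_mul {α r c w w' : ℝ} (hα : 0 ≤ α) (hr0 : 0 ≤ r) (hr1 : r ≤ 1)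
    (hc : 1 ≤ c) (hw : 0 ≤ w) (hw' : 0 ≤ w') (hww' : w ≤ c * w') :
    stretchedExpTail α r w ≤ c * (w' ^ (1 - r) / (α * r)) * exp (-α * w ^ r) := by
  have hpow : w ^ (1 - r) ≤ c * w' ^ (1 - r) :=
    calc w ^ (1 - r) ≤ (c * w') ^ (1 - r) := by gcongr
      _ = c ^ (1 - r) * w' ^ (1 - r) := mul_rpow (by linarith) hw'
      _ ≤ c * w' ^ (1 - r) := by gcongr; exact rpow_le_self_of_one_le hc (by linarith)
  unfold stretchedExpTail
  rw [mul_div_assoc']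
  gcongr

theorem add_two_mul_three_mul_sub_one_le (n k : ℕ) (hn : 1 ≤ n) :
    (k + 2) * (3 * n - 1) ≤ 2 * ((2 * (k + 1) + 1) * n - (k + 1)) := by
  obtain ⟨n, rfl⟩ := Nat.exists_eq_add_of_le' hn
  have e1 : 3 * (n + 1) - 1 = 3 * n + 2 := by omega
  have e2 : (2 * (k + 1) + 1) * (n + 1) - (k + 1) = (2 * k + 3) * n + (k + 2) := by
    rw [show (2 * (k + 1) + 1) * (n + 1) = (2 * k + 3) * n + (k + 2) + (k + 1) by ring]; omega
  rw [e1, e2]; nlinarith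

theorem double_tail_sum_bound (α r : ℝ) (hα : 0 < α) (hr0 : 0 < r) (hr1 : r < 1)
    (n : ℕ) (hn : 1 ≤ n)
    (hcond : 1 / (α * r * (n : ℝ) ^ r) + α * r / (n : ℝ) ^ (1 - r) ≤ 1 / 14) :
    ∑' k : ℕ, ∑' v : ℕ,
        Real.exp (-α * ((((2 * (k + 1) + 1) * n - (k + 1) + v : ℕ) : ℝ)) ^ r)
      < 636 / 169 * ((n : ℝ) ^ (1 - r) / (α * r)) *
        Real.exp (-α * (((3 * n - 1 : ℕ) : ℝ)) ^ r) := by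
  have hn0 : (0 : ℝ) < n := by exact_mod_cast hn
  have hreg : InTailRegime α r n := .of_one_div_add_le (mul_pos hα hr0) hn0 hcond
  set a : ℝ := ((3 * n - 1 : ℕ) : ℝ)
  have ha : a = 3 * n - 1 := by simp [a, Nat.cast_sub (by omega : 1 ≤ 3 * n)]
  have hna : (n : ℝ) ≤ a := by linarith [(Nat.one_le_cast (α := ℝ)).2 hn]
  have hTa := stretchedExpTail_le_mul hα.le hr0.le hr1.le (by norm_num : (1 : ℝ) ≤ 3)
    (hn0.le.trans hna) hn0.le (by linarith)
  have hE : 0 < (n : ℝ) ^ (1 - r) / (α * r) * exp (-α * a ^ r) := by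
    have := rpow_pos_of_pos hn0 (1 - r); positivity
  calc ∑' k : ℕ, ∑' v : ℕ, exp (-α * ((((2 * (k + 1) + 1) * n - (k + 1) + v : ℕ) : ℝ)) ^ r)
      ≤ 6 / 5 * stretchedExpTail α r a * (1 + 2 * (2 / 3) ^ 11) := by
        refine tsum_le_of_le_mul_two_div_pow
          (mul_nonneg (by norm_num) (stretchedExpTail_nonneg hα.le hr0.le (by linarith)))
          (fun k => tsum_nonneg fun v => (exp_pos _).le) fun k => ?_
        refine tsum_exp_neg_mul_rpow_le_two_div_pow hα hr0 hr1.le (by linarith)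
          (hreg.mono hα.le hr0.le hr1.le hn0 hna) ?_
        have h := (Nat.cast_le (α := ℝ)).2 (add_two_mul_three_mul_sub_one_le n k hn)
        simpa only [Nat.cast_mul, Nat.cast_add, Nat.cast_ofNat] using h
    _ ≤ 6 / 5 * (3 * ((n : ℝ) ^ (1 - r) / (α * r)) * exp (-α * a ^ r)) *
          (1 + 2 * (2 / 3) ^ 11) := by
        gcongr
    _ < 636 / 169 * ((n : ℝ) ^ (1 - r) / (α * r)) * exp (-α * a ^ r) := by
        nlinarith
end

section
/- Let α > 0, r ∈ (0,1), and let n ∈ ℕ satisfy (ln(π n))/(α r n^r) ≤ 1/14. Then n^{1-r}/(α r) < (1/π) · e^{α((3n-1)^r − n^r)}. -/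
theorem key_exponential_lower_bound (α r : ℝ) (hα : 0 < α) (hr0 : 0 < r) (hr1 : r < 1)
    (n : ℕ) (hn : 1 ≤ n)
    (hcond : Real.log (Real.pi * n) / (α * r * (n : ℝ) ^ r) ≤ 1 / 14) :
    (n : ℝ) ^ (1 - r) / (α * r)
      < (1 / Real.pi) * Real.exp (α * ((3 * (n : ℝ) - 1) ^ r - (n : ℝ) ^ r)) := by
  set N : ℝ := (n : ℝ) with hNdef
  have hN1 : (1:ℝ) ≤ N := by rw [hNdef]; exact_mod_cast hn
  have hNpos : 0 < N := by linarith
  have hNr : 0 < N ^ r := Real.rpow_pos_of_pos hNpos r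
  have hApos : 0 < α * r * N ^ r := by positivity
  have hπ : 0 < Real.pi := Real.pi_pos
  have hlog14 : Real.log (Real.pi * N) ≤ (α * r * N ^ r) / 14 := by
    rw [div_le_iff₀ hApos] at hcond; linarith
  have hlogπN1 : 1 ≤ Real.log (Real.pi * N) := by
    have h1 : Real.exp 1 ≤ Real.pi * N := by
      have h2 := Real.exp_one_lt_d9
      nlinarith [Real.pi_gt_three]
    calc (1:ℝ) = Real.log (Real.exp 1) := (Real.log_exp 1).symm
      _ ≤ Real.log (Real.pi * N) := Real.log_le_log (Real.exp_pos 1) h1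
  have hA14 : 14 ≤ α * r * N ^ r := by linarith
  -- exponent bound
  have h2N : (2*N) ^ r ≤ (3*N - 1) ^ r :=
    Real.rpow_le_rpow (by positivity) (by linarith) hr0.le
  have hmul : (2*N) ^ r = 2 ^ r * N ^ r := Real.mul_rpow (by norm_num) hNpos.le
  have h2r : 1 + r * Real.log 2 ≤ (2:ℝ) ^ r := by
    rw [Real.rpow_def_of_pos (by norm_num : (0:ℝ) < 2)]
    have h3 := Real.add_one_le_exp (Real.log 2 * r)
    linarith
  have e1 : α * (2*N) ^ r ≤ α * (3*N - 1) ^ r := mul_le_mul_of_nonneg_left h2N hα.le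
  have e2 : α * (r * Real.log 2) * N ^ r + α * N ^ r ≤ α * (2*N) ^ r := by
    rw [hmul]
    have h4 := mul_le_mul_of_nonneg_left h2r (mul_pos hα hNr).le
    nlinarith
  have hE : Real.log 2 * (α * r * N ^ r) ≤ α * ((3*N - 1) ^ r - N ^ r) := by
    nlinarith [e1, e2]
  -- log bound
  have hlt : Real.log (Real.pi * N) < α * ((3*N - 1) ^ r - N ^ r) := by
    have hl2 : (1:ℝ)/14 < Real.log 2 := by
      have h5 := Real.log_two_gt_d9; linarith
    nlinarith
  have hsplit : N ^ (1 - r) * N ^ r = N := by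
    rw [← Real.rpow_add hNpos, sub_add_cancel, Real.rpow_one]
  have hNA : N ^ (1 - r) / (α * r) = N / (α * r * N ^ r) := by
    rw [div_eq_div_iff (by positivity) hApos.ne']
    linear_combination (α * r) * hsplit
  rw [hNA]
  have hdiv : N / (α * r * N ^ r) ≤ N := div_le_self hNpos.le (by linarith)
  have hexp : Real.pi * N < Real.exp (α * ((3*N - 1) ^ r - N ^ r)) := by
    calc Real.pi * N = Real.exp (Real.log (Real.pi * N)) := (Real.exp_log (by positivity)).symm
      _ < _ := Real.exp_lt_exp.mpr hlt
  have hfinal : N < (1/Real.pi) * Real.exp (α * ((3*N - 1) ^ r - N ^ r)) := by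
    have h6 := mul_lt_mul_of_pos_left hexp (by positivity : (0:ℝ) < 1/Real.pi)
    calc N = (1/Real.pi) * (Real.pi * N) := by field_simp
      _ < _ := h6
  linarith
end

section
/- Let α > 0, r > 0, δ ∈ ℝ, and let m be a positive integer with m ≥ (14|δ+1−r|/(α r))^{1/r}. Then there exists Θ with |Θ| ≤ 14/13 such that ∫_m^∞ e^{-α t^r} t^δ dt = (e^{-α m^r}/(α r)) · m^{δ+1-r} · (1 + Θ · |δ+1−r|/(α r) · 1/m^r). -/
/-!
Write `f_s(t) = e^{-α t^r} t^s` and `c = δ + 1 - r`. Since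
`d/dt (-e^{-α t^r} t^c / (α r)) = f_δ(t) - c / (α r) · f_{δ-r}(t)`, integrating by parts gives
`∫_m^∞ f_δ = E + c / (α r) · ∫_m^∞ f_{δ-r}` with `E = e^{-α m^r} m^c / (α r)`, and `t^{-r} ≤ m^{-r}`
on `[m, ∞)` gives `0 ≤ ∫_m^∞ f_{δ-r} ≤ m^{-r} ∫_m^∞ f_δ`. The hypothesis on `m` makes
`|c| / (α r m^r) ≤ 1/14`, so the correction term is at most a fourteenth of the integral itself;
hence `∫_m^∞ f_δ ≤ (14/13) E`, which bounds `Θ`.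
-/

open MeasureTheory Filter Set Asymptotics Topology

noncomputable def stretchedExpMulRpow (α r s t : ℝ) : ℝ := Real.exp (-α * t ^ r) * t ^ s

section StretchedExp

variable {α r : ℝ}

lemma stretchedExpMulRpow_pos (s : ℝ) {t : ℝ} (ht : 0 < t) :
    0 < stretchedExpMulRpow α r s t :=
  mul_pos (Real.exp_pos _) (Real.rpow_pos_of_pos ht _)

lemma stretchedExpMulRpow_add (s s' : ℝ) {t : ℝ} (ht : 0 < t) :
    stretchedExpMulRpow α r (s + s') t = stretchedExpMulRpow α r s t * t ^ s' := by
  rw [stretchedExpMulRpow, stretchedExpMulRpow, Real.rpow_add ht, mul_assoc]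

lemma continuousOn_stretchedExpMulRpow (s : ℝ) :
    ContinuousOn (stretchedExpMulRpow α r s) (Ioi 0) := by
  intro t ht
  have ht0 : t ≠ 0 := (mem_Ioi.1 ht).ne'
  unfold stretchedExpMulRpow
  exact ContinuousAt.continuousWithinAt (by fun_prop (disch := exact Or.inl ht0))

lemma tendsto_stretchedExpMulRpow_atTop (hα : 0 < α) (hr : 0 < r) (s : ℝ) :
    Tendsto (stretchedExpMulRpow α r s) atTop (𝓝 0) := by
  refine ((tendsto_rpow_mul_exp_neg_mul_atTop_nhds_zero (s / r) α hα).comp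
    (tendsto_rpow_atTop hr)).congr' ?_
  filter_upwards [eventually_gt_atTop 0] with t ht
  rw [Function.comp_apply, ← Real.rpow_mul ht.le, mul_div_cancel₀ s hr.ne', mul_comm,
    stretchedExpMulRpow]

lemma integrableOn_stretchedExpMulRpow_Ioi (hα : 0 < α) (hr : 0 < r) (s : ℝ) {m : ℝ}
    (hm : 0 < m) : IntegrableOn (stretchedExpMulRpow α r s) (Ioi m) := by
  -- `f_s(t) = f_{s+2}(t) t^{-2}` with `f_{s+2}` bounded at infinity
  have hO : stretchedExpMulRpow α r s =O[atTop] fun t => t ^ (-2 : ℝ) := by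
    refine (((tendsto_stretchedExpMulRpow_atTop hα hr (s + 2)).isBigO_one ℝ).mul
      (isBigO_refl (fun t : ℝ => t ^ (-2 : ℝ)) atTop)).congr' ?_ (by simp)
    filter_upwards [eventually_gt_atTop 0] with t ht
    rw [← stretchedExpMulRpow_add _ _ ht, add_neg_cancel_right]
  have hcont : ContinuousOn (stretchedExpMulRpow α r s) (Ici m) :=
    (continuousOn_stretchedExpMulRpow s).mono fun t ht => hm.trans_le ht
  have hmeas : Measurable (stretchedExpMulRpow α r s) := by
    unfold stretchedExpMulRpow; fun_prop
  refine (integrableOn_Ici_iff_integrableAtFilter_atTop.2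
    ⟨hO.integrableAtFilter hmeas.aestronglyMeasurable.stronglyMeasurableAtFilter
      (integrableAtFilter_rpow_atTop_iff.2 (by norm_num)),
     hcont.locallyIntegrableOn measurableSet_Ici⟩).mono_set Ioi_subset_Ici_self

lemma hasDerivAt_neg_stretchedExpMulRpow_div (hα : α ≠ 0) (hr : r ≠ 0) (s : ℝ) {t : ℝ}
    (ht : 0 < t) :
    HasDerivAt (fun u => -(stretchedExpMulRpow α r (s + 1 - r) u / (α * r)))
      (stretchedExpMulRpow α r s t -
        (s + 1 - r) / (α * r) * stretchedExpMulRpow α r (s - r) t) t := by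
  have hexp : HasDerivAt (fun u : ℝ => Real.exp (-α * u ^ r))
      (Real.exp (-α * t ^ r) * (-α * (r * t ^ (r - 1)))) t :=
    ((Real.hasDerivAt_rpow_const (Or.inl ht.ne')).const_mul (-α)).exp
  have hpow : HasDerivAt (fun u : ℝ => u ^ (s + 1 - r)) ((s + 1 - r) * t ^ (s + 1 - r - 1)) t :=
    Real.hasDerivAt_rpow_const (Or.inl ht.ne')
  refine (((hexp.mul hpow).div_const (α * r)).neg).congr_deriv ?_
  have hs : t ^ s = t ^ (r - 1) * t ^ (s + 1 - r) := by
    rw [← Real.rpow_add ht]; ring_nf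
  have hsr : t ^ (s - r) = t ^ (s + 1 - r - 1) := by ring_nf
  rw [stretchedExpMulRpow, stretchedExpMulRpow, hs, hsr]
  field_simp
  ring

lemma integral_Ioi_stretchedExpMulRpow (hα : 0 < α) (hr : 0 < r) (s : ℝ) {m : ℝ}
    (hm : 0 < m) :
    ∫ t in Ioi m, stretchedExpMulRpow α r s t =
      stretchedExpMulRpow α r (s + 1 - r) m / (α * r) +
        (s + 1 - r) / (α * r) * ∫ t in Ioi m, stretchedExpMulRpow α r (s - r) t := by
  have hint := integrableOn_stretchedExpMulRpow_Ioi hα hr s hm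
  have hint' := (integrableOn_stretchedExpMulRpow_Ioi hα hr (s - r) hm).const_mul
    ((s + 1 - r) / (α * r))
  have hFTC := integral_Ioi_of_hasDerivAt_of_tendsto'
    (fun t ht => hasDerivAt_neg_stretchedExpMulRpow_div hα.ne' hr.ne' s
      (hm.trans_le ht)) (hint.sub hint')
    (by simpa using ((tendsto_stretchedExpMulRpow_atTop hα hr (s + 1 - r)).div_const
      (α * r)).neg)
  rw [integral_sub hint hint', integral_const_mul] at hFTC
  linarith

lemma integral_Ioi_stretchedExpMulRpow_sub_le (hα : 0 < α) (hr : 0 < r) (s : ℝ) {m : ℝ}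
    (hm : 0 < m) :
    ∫ t in Ioi m, stretchedExpMulRpow α r (s - r) t ≤
      1 / m ^ r * ∫ t in Ioi m, stretchedExpMulRpow α r s t := by
  rw [← integral_const_mul]
  refine setIntegral_mono_on (integrableOn_stretchedExpMulRpow_Ioi hα hr (s - r) hm)
    ((integrableOn_stretchedExpMulRpow_Ioi hα hr s hm).const_mul _) measurableSet_Ioi
    fun t ht => ?_
  have ht0 : 0 < t := hm.trans ht
  have hpow : t ^ (-r) ≤ 1 / m ^ r := by
    rw [one_div, ← Real.rpow_neg hm.le]
    exact Real.rpow_le_rpow_of_nonpos hm ht.le (neg_nonpos.2 hr.le)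
  rw [sub_eq_add_neg, stretchedExpMulRpow_add s (-r) ht0, mul_comm]
  exact mul_le_mul_of_nonneg_right hpow (stretchedExpMulRpow_pos s ht0).le

lemma integral_Ioi_stretchedExpMulRpow_nonneg (s : ℝ) {m : ℝ} (hm : 0 ≤ m) :
    0 ≤ ∫ t in Ioi m, stretchedExpMulRpow α r s t :=
  setIntegral_nonneg measurableSet_Ioi fun _ ht =>
    (stretchedExpMulRpow_pos s (hm.trans_lt ht)).le

end StretchedExp

lemma exists_abs_le_of_eq_add_mul {I E a J q ε : ℝ} (hE : 0 < E) (hq : 0 < q) (hJ : 0 ≤ J)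
    (hJI : J ≤ q * I) (hε : |a| * q ≤ ε) (hε1 : ε < 1) (hI : I = E + a * J) :
    ∃ Θ, |Θ| ≤ 1 / (1 - ε) ∧ I = E * (1 + Θ * |a| * q) := by
  have hI0 : 0 ≤ I := nonneg_of_mul_nonneg_right (hJ.trans hJI) hq
  have hIE : I * (1 - ε) ≤ E :=
    calc I * (1 - ε) = E + a * J - ε * I := by rw [← hI]; ring
      _ ≤ E + |a| * (q * I) - ε * I := by
        gcongr
        exact le_abs_self a
      _ ≤ E := by nlinarith
  refine ⟨J / (q * E) * (a / |a|), ?_, ?_⟩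
  · have hsign : |(a / |a|)| ≤ 1 := by rw [abs_div, abs_abs]; exact div_self_le_one _
    calc |J / (q * E) * (a / |a|)| ≤ J / (q * E) * 1 := by
          rw [abs_mul, abs_of_nonneg (by positivity : 0 ≤ J / (q * E))]; gcongr
      _ ≤ 1 / (1 - ε) := by
        rw [mul_one, div_le_div_iff₀ (by positivity) (by linarith)]
        nlinarith
  · have hsign : a / |a| * |a| = a := div_mul_cancel_of_imp fun h => abs_eq_zero.1 h
    rw [hI, mul_assoc (J / (q * E)), hsign]
    field_simp

lemma mul_one_div_rpow_le_of_rpow_le {A K m r : ℝ} (hA : 0 ≤ A) (hK : 0 < K) (hr : 0 < r)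
    (hm : 0 < m) (h : (K * A) ^ (1 / r) ≤ m) : A * (1 / m ^ r) ≤ 1 / K := by
  have hKA : K * A ≤ m ^ r := by
    calc K * A = ((K * A) ^ (1 / r)) ^ r := by
          rw [← Real.rpow_mul (by positivity), one_div_mul_cancel hr.ne', Real.rpow_one]
      _ ≤ m ^ r := by gcongr
  rw [mul_one_div, div_le_div_iff₀ (by positivity) hK, one_mul, mul_comm]
  exact hKA

theorem tail_integral_asymptotics (α r δ : ℝ) (hα : 0 < α) (hr : 0 < r)
    (m : ℕ) (hm : 1 ≤ m)
    (hcond : ((14 * |δ + 1 - r| / (α * r)) ^ (1 / r) : ℝ) ≤ (m : ℝ)) :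
    ∃ Θ : ℝ, |Θ| ≤ 14 / 13 ∧
      ∫ t in Set.Ici (m : ℝ), Real.exp (-α * t ^ r) * t ^ δ
        = Real.exp (-α * (m : ℝ) ^ r) / (α * r) * (m : ℝ) ^ (δ + 1 - r) *
          (1 + Θ * (|δ + 1 - r| / (α * r)) * (1 / (m : ℝ) ^ r)) := by
  have hm0 : (0 : ℝ) < m := by exact_mod_cast hm
  have hαr : 0 < α * r := mul_pos hα hr
  have hsmall : |(δ + 1 - r) / (α * r)| * (1 / (m : ℝ) ^ r) ≤ 1 / 14 := by
    rw [abs_div, abs_of_pos hαr]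
    exact mul_one_div_rpow_le_of_rpow_le (by positivity) (by norm_num) hr hm0
      (by rwa [← mul_div_assoc])
  obtain ⟨Θ, hΘ, hI⟩ := exists_abs_le_of_eq_add_mul
    (div_pos (stretchedExpMulRpow_pos (δ + 1 - r) hm0) hαr) (by positivity)
    (integral_Ioi_stretchedExpMulRpow_nonneg (δ - r) hm0.le)
    (integral_Ioi_stretchedExpMulRpow_sub_le hα hr δ hm0) hsmall (by norm_num)
    (integral_Ioi_stretchedExpMulRpow hα hr δ hm0)
  refine ⟨Θ, hΘ.trans_eq (by norm_num), ?_⟩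
  rw [integral_Ici_eq_integral_Ioi]
  change ∫ t in Ioi (m : ℝ), stretchedExpMulRpow α r δ t = _
  rw [hI, abs_div, abs_of_pos hαr, stretchedExpMulRpow]
  ring
end

section
/- For all α > 0, r ∈ (0,1), and positive integers n satisfying (ln(π n))/(α r n^r) ≤ 1/14, the remainder bound |r_n| ≤ ∑_{k=1}^∞ ∑_{v=(2k+1)n−k}^∞ e^{-α v^r} < (636/(169π)) · e^{-α n^r} holds, where r_n denotes any quantity bounded in absolute value by the stated double sum. -/
/-!
Convexity of `u ↦ exp (r u)` gives `x ^ r ≥ y ^ r (1 + r log (x / y))`, hence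
`exp (-α x ^ r) ≤ exp (-α n ^ r) (n / x) ^ A` with `A = α r n ^ r`. Every index of the double
sum is at least `(k + 2) n + v`, and comparing `(a + v) ^ (-s)` with the telescoping terms
`2 a ^ (2 - s) (1 / (a + v) - 1 / (a + v + 1))`, once in `v` and once in `k`, bounds the double
sum by `16 n 2 ^ (-A) exp (-α n ^ r)`. The hypothesis on `log (π n)` gives `A ≥ 14`
(as `log π > 1`) and `π n ≤ exp (A / 14)`, so `16 π n 2 ^ (-A) ≤ 16 exp (-6)`, far below
`636 / 169`.
-/

open Real Finset

theorem exp_neg_mul_rpow_le {α r x y : ℝ} (hα : 0 ≤ α) (hx : 0 < x) (hy : 0 < y) :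
    exp (-α * x ^ r) ≤ exp (-α * y ^ r) * y ^ (α * r * y ^ r) * x ^ (-(α * r * y ^ r)) := by
  have htangent : y ^ r * (1 + r * (log x - log y)) ≤ x ^ r := by
    have hsplit : x ^ r = y ^ r * exp (r * (log x - log y)) := by
      rw [rpow_def_of_pos hx, rpow_def_of_pos hy, ← exp_add]; ring_nf
    rw [hsplit]
    exact mul_le_mul_of_nonneg_left (by linarith [add_one_le_exp (r * (log x - log y))])
      (rpow_nonneg hy.le r)
  rw [rpow_def_of_pos hy (α * r * y ^ r), rpow_def_of_pos hx (-(α * r * y ^ r)),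
    ← exp_add, ← exp_add, exp_le_exp]
  nlinarith [mul_le_mul_of_nonneg_left htangent hα]

theorem rpow_neg_le_two_mul_inv_sub_inv {a s x : ℝ} (ha : 1 ≤ a) (hax : a ≤ x)
    (hs : 2 ≤ s) :
    x ^ (-s) ≤ 2 * a ^ (2 - s) * (x⁻¹ - (x + 1)⁻¹) := by
  have hx : 0 < x := by linarith
  have hsplit : x ^ (-s) = x ^ (2 - s) * (x ^ 2)⁻¹ := by
    rw [show -s = (2 - s) + (-2 : ℝ) by ring, rpow_add hx, rpow_neg hx.le, rpow_two]
  have hinv_sq : (x ^ 2)⁻¹ ≤ 2 * (x⁻¹ - (x + 1)⁻¹) := by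
    rw [inv_sub_inv hx.ne' (by positivity), inv_le_iff_one_le_mul₀ (by positivity)]
    field_simp
    nlinarith
  calc x ^ (-s) ≤ a ^ (2 - s) * (2 * (x⁻¹ - (x + 1)⁻¹)) := by
        rw [hsplit]
        exact mul_le_mul (rpow_le_rpow_of_nonpos (by linarith) hax (by linarith)) hinv_sq
          (by positivity) (by positivity)
    _ = 2 * a ^ (2 - s) * (x⁻¹ - (x + 1)⁻¹) := by ring

theorem sum_range_add_rpow_neg_le {a s : ℝ} (ha : 1 ≤ a) (hs : 2 ≤ s) (N : ℕ) :
    ∑ v ∈ range N, (a + v) ^ (-s) ≤ 2 * a ^ (1 - s) := by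
  have ha0 : 0 < a := by linarith
  calc ∑ v ∈ range N, (a + v) ^ (-s)
      ≤ ∑ v ∈ range N, 2 * a ^ (2 - s) * ((a + v)⁻¹ - (a + (v + 1 : ℕ))⁻¹) := by
        gcongr with v
        push_cast
        rw [← add_assoc]
        exact rpow_neg_le_two_mul_inv_sub_inv ha (by simp) hs
    _ = 2 * a ^ (2 - s) * (a⁻¹ - (a + N)⁻¹) := by
        rw [← mul_sum, sum_range_sub' (fun v : ℕ => (a + v)⁻¹)]
        simp
    _ ≤ 2 * a ^ (2 - s) * a⁻¹ := by
        gcongr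
        exact sub_le_self _ (by positivity)
    _ = 2 * a ^ (1 - s) := by
        rw [mul_assoc, ← rpow_neg_one, ← rpow_add ha0]; ring_nf

theorem summable_add_rpow_neg {a s : ℝ} (ha : 1 ≤ a) (hs : 2 ≤ s) :
    Summable fun v : ℕ => (a + v) ^ (-s) :=
  summable_of_sum_range_le (fun _ => by positivity) (sum_range_add_rpow_neg_le ha hs)

theorem tsum_add_rpow_neg_le {a s : ℝ} (ha : 1 ≤ a) (hs : 2 ≤ s) :
    ∑' v : ℕ, (a + v) ^ (-s) ≤ 2 * a ^ (1 - s) :=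
  Real.tsum_le_of_sum_range_le (fun _ => by positivity) (sum_range_add_rpow_neg_le ha hs)

theorem tsum_exp_neg_mul_add_rpow_le {α r y c : ℝ} (hα : 0 ≤ α) (hy : 0 < y) (hc : 1 ≤ c)
    (hA : 2 ≤ α * r * y ^ r) :
    ∑' v : ℕ, exp (-α * (c + v) ^ r) ≤
      2 * exp (-α * y ^ r) * y ^ (α * r * y ^ r) * c ^ (1 - α * r * y ^ r) := by
  set A := α * r * y ^ r
  have hbound : ∀ v : ℕ,
      exp (-α * (c + v) ^ r) ≤ exp (-α * y ^ r) * y ^ A * (c + v) ^ (-A) :=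
    fun v => exp_neg_mul_rpow_le hα (by positivity) hy
  have hsum := (summable_add_rpow_neg hc hA).mul_left (exp (-α * y ^ r) * y ^ A)
  calc ∑' v : ℕ, exp (-α * (c + v) ^ r)
      ≤ ∑' v : ℕ, exp (-α * y ^ r) * y ^ A * (c + v) ^ (-A) :=
        Summable.tsum_le_tsum hbound (.of_nonneg_of_le (fun _ => by positivity) hbound hsum) hsum
    _ = exp (-α * y ^ r) * y ^ A * ∑' v : ℕ, (c + v) ^ (-A) := tsum_mul_left
    _ ≤ exp (-α * y ^ r) * y ^ A * (2 * c ^ (1 - A)) := by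
        gcongr
        exact tsum_add_rpow_neg_le hc hA
    _ = 2 * exp (-α * y ^ r) * y ^ A * c ^ (1 - A) := by ring

theorem tsum_tsum_exp_neg_rpow_le {α r : ℝ} {n : ℕ} (hα : 0 ≤ α) (hn : 1 ≤ n)
    (hA : 3 ≤ α * r * (n : ℝ) ^ r) :
    ∑' k : ℕ, ∑' v : ℕ,
        exp (-α * ((((2 * (k + 1) + 1) * n - (k + 1) + v : ℕ) : ℝ)) ^ r)
      ≤ 16 * n * 2 ^ (-(α * r * (n : ℝ) ^ r)) * exp (-α * (n : ℝ) ^ r) := by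
  set A := α * r * (n : ℝ) ^ r
  have hn0 : (0 : ℝ) < n := by exact_mod_cast hn
  have hinner : ∀ k : ℕ,
      ∑' v : ℕ, exp (-α * ((((2 * (k + 1) + 1) * n - (k + 1) + v : ℕ) : ℝ)) ^ r)
        ≤ 2 * n * exp (-α * (n : ℝ) ^ r) * (2 + k) ^ (-(A - 1)) := by
    intro k
    have hc : (k + 2) * n ≤ (2 * (k + 1) + 1) * n - (k + 1) :=
      Nat.le_sub_of_add_le (by nlinarith)
    have hc' : ((k + 2) * n : ℝ) ≤ (((2 * (k + 1) + 1) * n - (k + 1) : ℕ) : ℝ) := by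
      exact_mod_cast hc
    have hkn : (1 : ℝ) ≤ (k + 2) * n := by
      nlinarith [(Nat.cast_nonneg k : (0 : ℝ) ≤ k), (Nat.one_le_cast.mpr hn : (1 : ℝ) ≤ n)]
    simp only [Nat.cast_add]
    calc _ ≤ 2 * exp (-α * (n : ℝ) ^ r) * (n : ℝ) ^ A *
            (((2 * (k + 1) + 1) * n - (k + 1) : ℕ) : ℝ) ^ (1 - A) :=
          tsum_exp_neg_mul_add_rpow_le hα hn0 (hkn.trans hc') (by linarith)
      _ ≤ 2 * exp (-α * (n : ℝ) ^ r) * (n : ℝ) ^ A * ((k + 2) * n : ℝ) ^ (1 - A) :=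
          mul_le_mul_of_nonneg_left
            (rpow_le_rpow_of_nonpos (one_pos.trans_le hkn) hc' (by linarith)) (by positivity)
      _ = 2 * exp (-α * (n : ℝ) ^ r) * (k + 2) ^ (1 - A) *
            ((n : ℝ) ^ A * (n : ℝ) ^ (1 - A)) := by
          rw [mul_rpow (by positivity) hn0.le]
          ring
      _ = 2 * n * exp (-α * (n : ℝ) ^ r) * (2 + k) ^ (-(A - 1)) := by
          rw [← rpow_add hn0, add_sub_cancel, rpow_one, add_comm (k : ℝ), neg_sub]
          ring
  have hsum := (summable_add_rpow_neg (a := (2 : ℝ)) one_le_two (s := A - 1)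
    (by linarith)).mul_left (2 * n * exp (-α * (n : ℝ) ^ r))
  calc _ ≤ ∑' k : ℕ, 2 * n * exp (-α * (n : ℝ) ^ r) * (2 + k) ^ (-(A - 1)) :=
        Summable.tsum_le_tsum hinner
          (.of_nonneg_of_le (fun _ => tsum_nonneg fun _ => (exp_pos _).le) hinner hsum) hsum
    _ = 2 * n * exp (-α * (n : ℝ) ^ r) * ∑' k : ℕ, (2 + (k : ℝ)) ^ (-(A - 1)) :=
        tsum_mul_left
    _ ≤ 2 * n * exp (-α * (n : ℝ) ^ r) * (2 * 2 ^ (1 - (A - 1))) := by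
        gcongr
        exact tsum_add_rpow_neg_le (a := (2 : ℝ)) one_le_two (by linarith)
    _ = 16 * n * 2 ^ (-A) * exp (-α * (n : ℝ) ^ r) := by
        rw [show 1 - (A - 1) = 2 + -A by ring, rpow_add two_pos]
        norm_num
        ring

theorem sixteen_mul_mul_two_rpow_neg_lt {x A : ℝ} (hA : 14 ≤ A) (hx : π * x ≤ exp (A / 14)) :
    16 * x * 2 ^ (-A) < 636 / (169 * π) := by
  have hdecay : π * x * 2 ^ (-A) ≤ 1 / 7 := by
    have hlog2 := log_two_gt_d9
    calc π * x * 2 ^ (-A) ≤ exp (A / 14) * exp (log 2 * -A) := by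
          rw [← rpow_def_of_pos two_pos]
          gcongr
      _ ≤ exp (-6) := by
          rw [← exp_add, exp_le_exp]
          nlinarith
      _ ≤ 1 / 7 := by
          rw [exp_neg, ← one_div]
          gcongr
          linarith [add_one_le_exp (6 : ℝ)]
  rw [lt_div_iff₀ (by positivity)]
  nlinarith

theorem remainder_bound_general (α r : ℝ) (hα : 0 < α) (hr0 : 0 < r)
    (n : ℕ) (hn : 1 ≤ n)
    (hlog : Real.log (Real.pi * n) / (α * r * (n : ℝ) ^ r) ≤ 1 / 14)
    (rn : ℝ)
    (hrn : |rn| ≤ ∑' k : ℕ, ∑' v : ℕ,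
      Real.exp (-α * ((((2 * (k + 1) + 1) * n - (k + 1) + v : ℕ) : ℝ)) ^ r)) :
    (∑' k : ℕ, ∑' v : ℕ,
        Real.exp (-α * ((((2 * (k + 1) + 1) * n - (k + 1) + v : ℕ) : ℝ)) ^ r))
        < 636 / (169 * Real.pi) * Real.exp (-α * (n : ℝ) ^ r) ∧
      |rn| < 636 / (169 * Real.pi) * Real.exp (-α * (n : ℝ) ^ r) := by
  have hn1 : (1 : ℝ) ≤ n := Nat.one_le_cast.mpr hn
  have hA0 : 0 < α * r * (n : ℝ) ^ r := by positivity
  have hlog' : log (π * n) ≤ α * r * (n : ℝ) ^ r / 14 := by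
    rw [div_le_iff₀ hA0] at hlog
    linarith
  have hA : 14 ≤ α * r * (n : ℝ) ^ r := by
    have hlog_pi : 1 < log π :=
      (lt_log_iff_exp_lt pi_pos).2 (exp_one_lt_d9.trans (by linarith [pi_gt_three]))
    have hlog_mono : log π ≤ log (π * n) := log_le_log pi_pos (by nlinarith [pi_pos])
    linarith
  have hbound := (tsum_tsum_exp_neg_rpow_le hα.le hn (by linarith)).trans_lt
    (mul_lt_mul_of_pos_right (sixteen_mul_mul_two_rpow_neg_lt hA
      ((log_le_iff_le_exp (by positivity)).1 hlog')) (exp_pos _))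
  exact ⟨hbound, hrn.trans_lt hbound⟩

theorem remainder_bound (α r : ℝ) (hα : 0 < α) (hr0 : 0 < r) (hr1 : r < 1)
    (n : ℕ) (hn : 1 ≤ n)
    (hlog : Real.log (Real.pi * n) / (α * r * (n : ℝ) ^ r) ≤ 1 / 14)
    (hcond : 1 / (α * r * (n : ℝ) ^ r) + α * r / (n : ℝ) ^ (1 - r) ≤ 1 / 14)
    (rn : ℝ)
    (hrn : |rn| ≤ ∑' k : ℕ, ∑' v : ℕ,
      Real.exp (-α * ((((2 * (k + 1) + 1) * n - (k + 1) + v : ℕ) : ℝ)) ^ r)) :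
    (∑' k : ℕ, ∑' v : ℕ,
        Real.exp (-α * ((((2 * (k + 1) + 1) * n - (k + 1) + v : ℕ) : ℝ)) ^ r))
        < 636 / (169 * Real.pi) * Real.exp (-α * (n : ℝ) ^ r) ∧
      |rn| < 636 / (169 * Real.pi) * Real.exp (-α * (n : ℝ) ^ r) :=
  remainder_bound_general α r hα hr0 n hn hlog rn hrn
end
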